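/- arXiv:2211.06072 — 3 statements merged into one kernel-verified Lean document; each statement's English description precedes it below -/
import Mathlib

section
/- Given a USO O of the k-cube and, for each vertex v of the k-cube, a USO O_v of the d-cube, the product orientation O' of the (k+d)-cube defined by O'(v)_i := O(v_1…v_k)_i for i ≤ k and O'(v)_i := O_v(v_{k+1}…v_{k+d})_{i-k} for i > k (where O_v depends only on the first k coordinates of v), is a USO. -/
/-- The Szabó–Welzl condition: `O` is a unique sink orientation of the `n`-cube. -/
def IsUSO {n : ℕ} (O : (Fin n → Bool) → (Fin n → Bool)) : Prop :=
  ∀ v w : Fin n → Bool, v ≠ w → ∃ i : Fin n, v i ≠ w i ∧ O v i = O w i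

/-- The product construction: a `k`-dimensional frame USO `O` together with a
`d`-dimensional USO `Ov a` for each frame vertex `a` yields a `(k+d)`-dimensional
USO; the first `k` coordinates of the outmap come from the frame, the last `d`
from the hypervertex USO chosen by the frame part of the vertex. -/
theorem stmt13 (k d : ℕ) (O : (Fin k → Bool) → (Fin k → Bool)) (hO : IsUSO O)
    (Ov : (Fin k → Bool) → (Fin d → Bool) → (Fin d → Bool))
    (hOv : ∀ a : Fin k → Bool, IsUSO (Ov a)) :
    IsUSO (fun v : Fin (k + d) → Bool =>
      Fin.append (O fun j => v (Fin.castAdd d j))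
        (Ov (fun j => v (Fin.castAdd d j)) (fun j => v (Fin.natAdd k j)))) := by
  intro v w hvw
  by_cases hf : (fun j => v (Fin.castAdd d j)) = (fun j => w (Fin.castAdd d j))
  · -- frame parts equal, hypervertex parts differ
    have hh : (fun j => v (Fin.natAdd k j)) ≠ (fun j => w (Fin.natAdd k j)) := by
      intro h
      apply hvw
      funext i
      induction i using Fin.addCases with
      | left j => exact congrFun hf j
      | right j => exact congrFun h j
    obtain ⟨i, hi1, hi2⟩ := hOv (fun j => v (Fin.castAdd d j)) _ _ hh
    refine ⟨Fin.natAdd k i, hi1, ?_⟩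
    simp only [Fin.append_right]
    rw [hf] at hi2 ⊢
    exact hi2
  · obtain ⟨i, hi1, hi2⟩ := hO _ _ hf
    exact ⟨Fin.castAdd d i, hi1, by simp only [Fin.append_left]; exact hi2⟩
end

section
/- Let O be a USO of the k-cube and h ∈ [k]. Define O' on the (k-1)-cube by collapsing each h-edge to its sink: for u ∈ {0,1}^{k-1}, let v(u) be the endpoint of the h-edge over u whose h-edge is incoming (i.e., O(v(u))_h indicates the unique sink of the edge), and set O'(u)_i := O(v(u))_i for the coordinates i ≠ h. Then O' is a USO of the (k-1)-cube. -/
/-- The neighbor of `v` across the `i`-edge. -/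
def flipV {k : ℕ} (v : Fin k → Bool) (i : Fin k) : Fin k → Bool :=
  Function.update v i (!(v i))

/-- The inherited orientation: collapsing every `h`-edge of a USO of the
`(n+1)`-cube to its sink yields a USO of the `n`-cube. The sink of the `h`-edge
over `u` is `insertNth h b u` where `b = O(insertNth h false u)_h`, since the
edge is upwards iff `b = true`. -/
theorem stmt17 (n : ℕ) (O : (Fin (n + 1) → Bool) → (Fin (n + 1) → Bool))
    (hO : ∀ (v : Fin (n + 1) → Bool) (i : Fin (n + 1)), O v i = O (flipV v i) i)
    (hUSO : IsUSO O) (h : Fin (n + 1)) :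
    IsUSO (fun (u : Fin n → Bool) (j : Fin n) =>
      O (h.insertNth (O (h.insertNth false u) h) u) (h.succAbove j)) := by
  intro u u' huu
  set b : Bool := O (h.insertNth false u) h with hb
  set b' : Bool := O (h.insertNth false u') h with hb'
  have hflip : ∀ u : Fin n → Bool,
      flipV (h.insertNth false u) h = h.insertNth true u := by
    intro u
    funext i
    rcases eq_or_ne i h with rfl | hi
    · simp [flipV]
    · obtain ⟨j, rfl⟩ := Fin.exists_succAbove_eq hi
      simp [flipV, Function.update_of_ne (Fin.succAbove_ne h j)]
  have hval : ∀ (u : Fin n → Bool) (c : Bool), c = O (h.insertNth false u) h →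
      O (h.insertNth c u) h = c := by
    intro u c hc
    cases c with
    | false => exact hc.symm
    | true =>
      rw [← hflip, ← hO]
      exact hc.symm
  have hvw : (h.insertNth b u : Fin (n+1) → Bool) ≠ (h.insertNth b' u' : Fin (n+1) → Bool) := by
    intro hvw
    apply huu
    funext j
    have := congrFun hvw (h.succAbove j)
    simpa using this
  obtain ⟨i, hi1, hi2⟩ := hUSO _ _ hvw
  rcases eq_or_ne i h with rfl | hih
  · exfalso
    rw [Fin.insertNth_apply_same, Fin.insertNth_apply_same] at hi1
    exact hi1 (((hval u b hb).symm.trans hi2).trans (hval u' b' hb'))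
  · obtain ⟨j, rfl⟩ := Fin.exists_succAbove_eq hih
    refine ⟨j, ?_, hi2⟩
    simpa using hi1
end

section
/- Let O be a USO of the k-cube, and f a d-dimensional face such that for every dimension i with f_i ≠ *, all i-edges incident to vertices of f are oriented the same way (i.e., O(v)_i = O(w)_i for all v, w ∈ V(f)). Then replacing the orientation inside f by any USO O_f of the d-cube (keeping all edges leaving f and all edges outside f unchanged) yields a USO of the k-cube. -/
open scoped Classical

/-- `v` belongs to the face described by `f ∈ {0,1,*}^k` (`none` = `*`). -/
def inFace {k : ℕ} (f : Fin k → Option Bool) (v : Fin k → Bool) : Prop :=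
  ∀ i : Fin k, ∀ b : Bool, f i = some b → v i = b

lemma aux_mixed {k : ℕ} (O : (Fin k → Bool) → (Fin k → Bool)) (hO : IsUSO O)
    (f : Fin k → Option Bool)
    (hcomb : ∀ v w : Fin k → Bool, inFace f v → inFace f w →
      ∀ i : Fin k, f i ≠ none → O v i = O w i)
    (v w : Fin k → Bool) (hv : inFace f v) (hw : ¬ inFace f w) :
    ∃ i, f i ≠ none ∧ v i ≠ w i ∧ O v i = O w i := by
  set w' : Fin k → Bool := fun i => (f i).getD (w i) with hw'def
  have hw' : inFace f w' := by
    intro i b h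
    simp [hw'def, h]
  have hne : w' ≠ w := by
    intro h
    apply hw
    intro i b hb
    rw [← congrFun h i]
    simp [hw'def, hb]
  obtain ⟨i, hi1, hi2⟩ := hO w' w hne
  have hfi : f i ≠ none := by
    intro h
    apply hi1
    simp [hw'def, h]
  obtain ⟨b, hb⟩ := Option.ne_none_iff_exists'.mp hfi
  have hvw' : v i = w' i := by
    rw [hv i b hb]
    simp [hw'def, hb]
  refine ⟨i, hfi, ?_, ?_⟩
  · rw [hvw']; exact hi1
  · rw [hcomb v w' hv hw' i hfi]; exact hi2

/-- Hypervertex replacement: if every dimension leaving the `d`-dimensional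
face `f` is combed with respect to the vertices of `f`, then the orientation
inside `f` can be replaced by any `d`-dimensional USO `Of`, keeping all other
edges, and the result is a USO. The equivalence `e` identifies `Fin d` with the
`*`-coordinates of `f`. -/
theorem stmt18 (k d : ℕ) (O : (Fin k → Bool) → (Fin k → Bool)) (hO : IsUSO O)
    (f : Fin k → Option Bool) (e : Fin d ≃ {i : Fin k // f i = none})
    (hcomb : ∀ v w : Fin k → Bool, inFace f v → inFace f w →
      ∀ i : Fin k, f i ≠ none → O v i = O w i)
    (Of : (Fin d → Bool) → (Fin d → Bool)) (hOf : IsUSO Of) :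
    IsUSO (fun v i =>
      if inFace f v then
        if hi : f i = none then Of (fun j => v (e j).1) (e.symm ⟨i, hi⟩)
        else O v i
      else O v i) := by
  intro v w hvw
  by_cases hv : inFace f v <;> by_cases hw : inFace f w
  · -- both in the face
    have hne : (fun j => v (e j).1) ≠ (fun j => w (e j).1) := by
      intro h
      apply hvw
      funext i
      by_cases hi : f i = none
      · have := congrFun h (e.symm ⟨i, hi⟩)
        simpa using this
      · obtain ⟨b, hb⟩ := Option.ne_none_iff_exists'.mp hi
        rw [hv i b hb, hw i b hb]
    obtain ⟨j, hj1, hj2⟩ := hOf _ _ hne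
    refine ⟨(e j).1, hj1, ?_⟩
    have hje : f (e j).1 = none := (e j).2
    simp only [hv, hw, if_true, hje, dif_pos]
    have : e.symm ⟨(e j).1, (e j).2⟩ = j := by
      simp
    rw [this]
    exact hj2
  · obtain ⟨i, hfi, hi1, hi2⟩ := aux_mixed O hO f hcomb v w hv hw
    exact ⟨i, hi1, by simp [hv, hw, hfi, hi2]⟩
  · obtain ⟨i, hfi, hi1, hi2⟩ := aux_mixed O hO f hcomb w v hw hv
    exact ⟨i, hi1.symm, by simp [hv, hw, hfi, hi2.symm]⟩
  · obtain ⟨i, hi1, hi2⟩ := hO v w hvw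
    exact ⟨i, hi1, by simp [hv, hw, hi2]⟩
end
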